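/- (CPO Update Worst-Case Constraint Violation.) Let π_k and π_{k+1} be policies with π_k(a|s) > 0 for all s, a, let C_i be an auxiliary cost function, and let d_i ∈ ℝ and δ > 0. Suppose J_{C_i}(π_k) + (1/(1-γ)) E_{s∼d^{π_k}, a∼π_{k+1}(·|s)}[A_{C_i}^{π_k}(s,a)] ≤ d_i and E_{s∼d^{π_k}}[D_KL(π_{k+1}‖π_k)[s]] ≤ δ. Then J_{C_i}(π_{k+1}) ≤ d_i + √(2δ) γ ε_{C_i}^{π_{k+1}} / (1-γ)², where ε_{C_i}^{π_{k+1}} = max_s |E_{a∼π_{k+1}(·|s)}[A_{C_i}^{π_k}(s,a)]|. -/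

import Mathlib

open BigOperators Finset Matrix

noncomputable section

variable {S A : Type*}

/-- Policy transition matrix (column-stochastic): entry `(s', s)` is
`P_pol(s'|s) = ∑ a, P(s'|s,a) pol(a|s)`. -/
def Pmat [Fintype A] (P : S → A → S → ℝ) (pol : S → A → ℝ) : Matrix S S ℝ :=
  fun s' s => ∑ a, P s a s' * pol s a

/-- Discounted future state distribution `d^π = (1-γ) ∑_t γ^t P_π^t μ`. -/
def dFut [Fintype S] [DecidableEq S] [Fintype A] (γ : ℝ) (P : S → A → S → ℝ)
    (μ : S → ℝ) (pol : S → A → ℝ) : S → ℝ :=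
  fun s => (1 - γ) * ∑' t : ℕ, γ ^ t * ((Pmat P pol ^ t) *ᵥ μ) s

/-- Discounted return `J(π)` (also used as the cost return `J_C(π)` with a cost `C`
in place of the reward `R`). -/
def Jret [Fintype S] [DecidableEq S] [Fintype A] (γ : ℝ) (P : S → A → S → ℝ)
    (R : S → A → S → ℝ) (μ : S → ℝ) (pol : S → A → ℝ) : ℝ :=
  (1 / (1 - γ)) * ∑ s, dFut γ P μ pol s * (∑ a, pol s a * (∑ s', P s a s' * R s a s'))

/-- Total variational divergence between action distributions at state `s`. -/
def DTV [Fintype A] (pol' pol : S → A → ℝ) (s : S) : ℝ :=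
  (1 / 2) * ∑ a, |pol' s a - pol s a|

/-- Kullback–Leibler divergence between action distributions at state `s`. -/
def DKL [Fintype A] (pol' pol : S → A → ℝ) (s : S) : ℝ :=
  ∑ a, pol' s a * Real.log (pol' s a / pol s a)

/-- Advantage function `A^π(s,a) = Q^π(s,a) - V^π(s)` built from a value function `V`
(also used for cost advantages with a cost `C` in place of `R`). -/
def Adv [Fintype S] (γ : ℝ) (P : S → A → S → ℝ) (R : S → A → S → ℝ)
    (V : S → ℝ) (s : S) (a : A) : ℝ :=
  (∑ s', P s a s' * (R s a s' + γ * V s')) - V s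

/-- `ε_f^{π'} = max_s |E_{a∼π'(·|s), s'∼P}[δ_f(s,a,s')]|` where
`δ_f(s,a,s') = R(s,a,s') + γ f(s') - f(s)`. -/
def epsF [Fintype S] [Fintype A] (γ : ℝ) (P : S → A → S → ℝ) (R : S → A → S → ℝ)
    (f : S → ℝ) (pol' : S → A → ℝ) : ℝ :=
  ⨆ s, |∑ a, pol' s a * (∑ s', P s a s' * (R s a s' + γ * f s' - f s))|

/-- Surrogate `L_{π,f}(π') = E_{s∼d^π, a∼π, s'∼P}[(π'(a|s)/π(a|s) - 1) δ_f(s,a,s')]`. -/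
def Lsurr [Fintype S] [DecidableEq S] [Fintype A] (γ : ℝ) (P : S → A → S → ℝ)
    (R : S → A → S → ℝ) (μ : S → ℝ) (f : S → ℝ) (pol pol' : S → A → ℝ) : ℝ :=
  ∑ s, dFut γ P μ pol s * (∑ a, pol s a * (∑ s', P s a s' *
    ((pol' s a / pol s a - 1) * (R s a s' + γ * f s' - f s))))

/-!
With `V` the cost value function of `π_k`, the performance identity
`(1 - γ) J(π) = E_{d^π, π}[A_V] + (1 - γ) E_μ[V]` holds for every policy `π`, and
`E_{π_k}[A_V] = 0`. Writing `Ā(s) = E_{a ∼ π_{k+1}}[A_V(s, a)]`, `J(π_{k+1})` therefore exceeds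
the surrogate of the hypothesis by `E_{d^{π_{k+1}} - d^{π_k}}[Ā] / (1 - γ)`, which is at most
`ε ‖d^{π_{k+1}} - d^{π_k}‖₁ / (1 - γ)`. Subtracting the flow equations `d = (1 - γ) μ + γ P_π d`
of the two policies and using that column-stochastic matrices are `ℓ¹`-contractions gives
`‖d^{π_{k+1}} - d^{π_k}‖₁ ≤ 2 γ E_{d^{π_k}}[D_TV] / (1 - γ)`, and Pinsker's inequality with
Cauchy–Schwarz gives `2 E_{d^{π_k}}[D_TV] ≤ √(2 E_{d^{π_k}}[D_KL]) ≤ √(2δ)`.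
-/

open Real Set

lemma hasDerivAt_mul_log_sub_sq_div {x : ℝ} (hx : 0 < x) :
    HasDerivAt (fun y => y * log y - y + 1 - 3 * (y - 1) ^ 2 / (2 * (y + 2)))
      (log x - 3 * (x - 1) * (x + 5) / (2 * (x + 2) ^ 2)) x := by
  have hquot : HasDerivAt (fun y => 3 * (y - 1) ^ 2 / (2 * (y + 2)))
      ((3 * (2 * (x - 1)) * (2 * (x + 2)) - 3 * (x - 1) ^ 2 * 2) / (2 * (x + 2)) ^ 2) x := by
    refine HasDerivAt.div ?_ ?_ (by positivity)
    · simpa using (((hasDerivAt_id x).sub_const 1).pow 2).const_mul (3 : ℝ)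
    · simpa using ((hasDerivAt_id x).add_const 2).const_mul (2 : ℝ)
  refine ((((hasDerivAt_mul_log hx.ne').sub (hasDerivAt_id x)).add_const 1).sub
    hquot).congr_deriv ?_
  field_simp
  ring

lemma hasDerivAt_log_sub_div {x : ℝ} (hx : 0 < x) :
    HasDerivAt (fun y => log y - 3 * (y - 1) * (y + 5) / (2 * (y + 2) ^ 2))
      (1 / x - 27 / (x + 2) ^ 3) x := by
  have hquot : HasDerivAt (fun y => 3 * (y - 1) * (y + 5) / (2 * (y + 2) ^ 2))
      (((3 * (x + 5) + 3 * (x - 1)) * (2 * (x + 2) ^ 2) - 3 * (x - 1) * (x + 5) * (4 * (x + 2)))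
        / (2 * (x + 2) ^ 2) ^ 2) x := by
    refine HasDerivAt.div ?_ ?_ (by positivity)
    · exact ((((hasDerivAt_id x).sub_const 1).const_mul (3 : ℝ)).mul
        ((hasDerivAt_id x).add_const 5)).congr_deriv (by simp)
    · exact ((((hasDerivAt_id x).add_const 2).pow 2).const_mul (2 : ℝ)).congr_deriv
        (by simp; ring)
  refine ((hasDerivAt_log hx.ne').sub hquot).congr_deriv ?_
  field_simp
  ring

/-- The quadratic lower bound behind Pinsker's inequality, with the constant chosen so that
`∑ (p + 2q) = 3` cancels the `3/2` after Cauchy–Schwarz. -/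
lemma sq_div_le_mul_log_sub {x : ℝ} (hx : 0 ≤ x) :
    3 * (x - 1) ^ 2 / (2 * (x + 2)) ≤ x * log x - x + 1 := by
  rcases hx.eq_or_lt with rfl | hx
  · norm_num
  set g := fun y : ℝ => y * log y - y + 1 - 3 * (y - 1) ^ 2 / (2 * (y + 2))
  have hconvex : ConvexOn ℝ (Ioi 0) g := by
    refine convexOn_of_hasDerivWithinAt2_nonneg
      (f' := fun y => log y - 3 * (y - 1) * (y + 5) / (2 * (y + 2) ^ 2))
      (f'' := fun y => 1 / y - 27 / (y + 2) ^ 3) (convex_Ioi 0)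
      (fun y hy => (hasDerivAt_mul_log_sub_sq_div hy).continuousAt.continuousWithinAt)
      (fun y hy => ?_) (fun y hy => ?_) (fun y hy => ?_) <;> rw [interior_Ioi] at hy
    · exact (hasDerivAt_mul_log_sub_sq_div hy).hasDerivWithinAt
    · exact (hasDerivAt_log_sub_div hy).hasDerivWithinAt
    · have hy : (0 : ℝ) < y := hy
      rw [sub_nonneg, div_le_div_iff₀ (by positivity) hy]
      nlinarith [mul_nonneg (sq_nonneg (y - 1)) (by linarith : (0 : ℝ) ≤ y + 8)]
  have hmin : IsMinOn g (Ioi 0) 1 := by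
    refine hconvex.isMinOn_of_rightDeriv_eq_zero (by simp) ?_
    rw [(hasDerivAt_mul_log_sub_sq_div one_pos).hasDerivWithinAt.derivWithin
      (uniqueDiffWithinAt_Ioi 1)]
    norm_num
  have := hmin (mem_Ioi.2 hx)
  simp only [g, mem_ofPred_eq] at this
  norm_num at this
  linarith

lemma sub_add_sq_div_le_mul_log_div {p q : ℝ} (hp : 0 ≤ p) (hq : 0 < q) :
    p - q + 3 * (p - q) ^ 2 / (2 * (p + 2 * q)) ≤ p * log (p / q) := by
  have key := mul_le_mul_of_nonneg_left (sq_div_le_mul_log_sub (div_nonneg hp hq.le)) hq.le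
  have e1 : q * (3 * (p / q - 1) ^ 2 / (2 * (p / q + 2)))
      = 3 * (p - q) ^ 2 / (2 * (p + 2 * q)) := by
    field_simp
  have e2 : q * (p / q * log (p / q) - p / q + 1) = p * log (p / q) - p + q := by
    field_simp
  linarith

/-- **Pinsker's inequality**. -/
theorem sq_sum_abs_sub_le_two_mul_sum_mul_log_div {ι : Type*} [Fintype ι] {p q : ι → ℝ}
    (hp : ∀ i, 0 ≤ p i) (hq : ∀ i, 0 < q i) (hp1 : ∑ i, p i = 1) (hq1 : ∑ i, q i = 1) :
    (∑ i, |p i - q i|) ^ 2 ≤ 2 * ∑ i, p i * log (p i / q i) := by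
  have hden : ∀ i ∈ Finset.univ, 0 < p i + 2 * q i := fun i _ => by linarith [hp i, hq i]
  have hsum : ∑ i, (p i + 2 * q i) = 3 := by
    rw [Finset.sum_add_distrib, ← Finset.mul_sum, hp1, hq1]; norm_num
  have titu := Finset.sq_sum_div_le_sum_sq_div Finset.univ (fun i => |p i - q i|) hden
  have pointwise := Finset.sum_le_sum fun i (_ : i ∈ Finset.univ) =>
    sub_add_sq_div_le_mul_log_div (hp i) (hq i)
  simp only [sq_abs, hsum] at titu
  rw [Finset.sum_add_distrib, Finset.sum_sub_distrib, hp1, hq1, sub_self, zero_add] at pointwise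
  have e : ∑ i, 3 * (p i - q i) ^ 2 / (2 * (p i + 2 * q i))
      = 3 / 2 * ∑ i, (p i - q i) ^ 2 / (p i + 2 * q i) := by
    rw [Finset.mul_sum]; congr 1; ext i; field_simp
  linarith

section Pinsker

variable {S A : Type*} [Fintype A] {pol pol' : S → A → ℝ}

theorem sq_two_mul_DTV_le (hpol'0 : ∀ s a, 0 ≤ pol' s a) (hpol'1 : ∀ s, ∑ a, pol' s a = 1)
    (hpol0 : ∀ s a, 0 < pol s a) (hpol1 : ∀ s, ∑ a, pol s a = 1) (s : S) :
    (2 * DTV pol' pol s) ^ 2 ≤ 2 * DKL pol' pol s := by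
  have h := sq_sum_abs_sub_le_two_mul_sum_mul_log_div (hpol'0 s) (hpol0 s) (hpol'1 s) (hpol1 s)
  rwa [DTV, DKL, ← mul_assoc, mul_one_div_cancel two_ne_zero, one_mul]

theorem two_mul_sum_mul_DTV_le_sqrt [Fintype S] {w : S → ℝ} (hw0 : ∀ s, 0 ≤ w s)
    (hw1 : ∑ s, w s = 1)
    (hpol'0 : ∀ s a, 0 ≤ pol' s a) (hpol'1 : ∀ s, ∑ a, pol' s a = 1)
    (hpol0 : ∀ s a, 0 < pol s a) (hpol1 : ∀ s, ∑ a, pol s a = 1) :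
    2 * ∑ s, w s * DTV pol' pol s ≤ √(2 * ∑ s, w s * DKL pol' pol s) := by
  have hpinsker := sq_two_mul_DTV_le hpol'0 hpol'1 hpol0 hpol1
  have hcs := Finset.sum_sq_le_sum_mul_sum_of_sq_le_mul Finset.univ
    (r := fun s => w s * (2 * DTV pol' pol s)) (f := w) (g := fun s => w s * (2 * DKL pol' pol s))
    (fun s _ => hw0 s) (fun s _ => mul_nonneg (hw0 s) ((sq_nonneg _).trans (hpinsker s)))
    fun s _ => by
      rw [mul_pow, sq, mul_assoc]
      exact mul_le_mul_of_nonneg_left (mul_le_mul_of_nonneg_left (hpinsker s) (hw0 s)) (hw0 s)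
  apply Real.le_sqrt_of_sq_le
  simpa only [hw1, one_mul, Finset.mul_sum, mul_left_comm] using hcs

end Pinsker

namespace Matrix

variable {n : Type*} [Fintype n]

theorem sum_abs_mulVec_le (M : Matrix n n ℝ) (v : n → ℝ) :
    ∑ i, |(M *ᵥ v) i| ≤ ∑ j, (∑ i, |M i j|) * |v j| := by
  calc ∑ i, |(M *ᵥ v) i| ≤ ∑ i, ∑ j, |M i j| * |v j| := by
        gcongr with i
        simpa only [mulVec, dotProduct, abs_mul] using
          Finset.abs_sum_le_sum_abs (fun j => M i j * v j) Finset.univ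
    _ = ∑ j, (∑ i, |M i j|) * |v j| := by rw [Finset.sum_comm]; simp only [Finset.sum_mul]

theorem sum_abs_mulVec_le_of_mem_colStochastic [DecidableEq n] {M : Matrix n n ℝ}
    (hM : M ∈ colStochastic ℝ n) (v : n → ℝ) : ∑ i, |(M *ᵥ v) i| ≤ ∑ i, |v i| := by
  refine (sum_abs_mulVec_le M v).trans_eq ?_
  simp [abs_of_nonneg (nonneg_of_mem_colStochastic hM), sum_col_of_mem_colStochastic hM]

end Matrix

section PolicyMatrix

variable {S A : Type*} [Fintype A] {P : S → A → S → ℝ}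

theorem sum_Pmat_apply [Fintype S] (hP1 : ∀ s a, ∑ s', P s a s' = 1) (w : S → A → ℝ) (j : S) :
    ∑ i, Pmat P w i j = ∑ a, w j a := by
  simp only [Pmat]
  rw [Finset.sum_comm]
  simp [← Finset.sum_mul, hP1]

theorem Pmat_mem_colStochastic [Fintype S] [DecidableEq S] {pol : S → A → ℝ}
    (hP0 : ∀ s a s', 0 ≤ P s a s') (hP1 : ∀ s a, ∑ s', P s a s' = 1)
    (hpol0 : ∀ s a, 0 ≤ pol s a) (hpol1 : ∀ s, ∑ a, pol s a = 1) :
    Pmat P pol ∈ colStochastic ℝ S :=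
  mem_colStochastic_iff_sum.2
    ⟨fun i j => Finset.sum_nonneg fun a _ => mul_nonneg (hP0 j a i) (hpol0 j a),
      fun j => (sum_Pmat_apply hP1 pol j).trans (hpol1 j)⟩

theorem Pmat_sub (pol' pol : S → A → ℝ) : Pmat P pol' - Pmat P pol = Pmat P (pol' - pol) := by
  ext i j
  simp [Pmat, mul_sub]

theorem sum_abs_Pmat_apply_le [Fintype S] (hP0 : ∀ s a s', 0 ≤ P s a s')
    (hP1 : ∀ s a, ∑ s', P s a s' = 1) (w : S → A → ℝ) (j : S) :
    ∑ i, |Pmat P w i j| ≤ ∑ a, |w j a| := by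
  calc ∑ i, |Pmat P w i j| ≤ ∑ i, Pmat P (fun s a => |w s a|) i j := by
        gcongr with i
        simpa only [Pmat, abs_mul, abs_of_nonneg (hP0 _ _ _)] using
          Finset.abs_sum_le_sum_abs (fun a => P j a i * w j a) Finset.univ
    _ = ∑ a, |w j a| := sum_Pmat_apply hP1 _ j

theorem sum_abs_Pmat_sub_mulVec_le [Fintype S] {pol pol' : S → A → ℝ}
    (hP0 : ∀ s a s', 0 ≤ P s a s') (hP1 : ∀ s a, ∑ s', P s a s' = 1) {v : S → ℝ}
    (hv : ∀ s, 0 ≤ v s) :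
    ∑ s, |((Pmat P pol' - Pmat P pol) *ᵥ v) s| ≤ 2 * ∑ s, v s * DTV pol' pol s := by
  rw [Pmat_sub]
  refine (sum_abs_mulVec_le _ v).trans ?_
  rw [Finset.mul_sum]
  refine Finset.sum_le_sum fun j _ => ?_
  rw [abs_of_nonneg (hv j), DTV, mul_comm (v j)]
  calc (∑ i, |Pmat P (pol' - pol) i j|) * v j ≤ (∑ a, |(pol' - pol) j a|) * v j :=
        mul_le_mul_of_nonneg_right (sum_abs_Pmat_apply_le hP0 hP1 _ j) (hv j)
    _ = 2 * ((1 / 2 * ∑ a, |pol' j a - pol j a|) * v j) := by simp only [Pi.sub_apply]; ring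

end PolicyMatrix

theorem Matrix.summable_geometric_mul_pow_mulVec {n : Type*} [Fintype n] [DecidableEq n]
    {M : Matrix n n ℝ} (hM : M ∈ colStochastic ℝ n) {γ : ℝ} (hγ0 : 0 ≤ γ) (hγ1 : γ < 1)
    (μ : n → ℝ) (i : n) : Summable fun t : ℕ => γ ^ t * ((M ^ t) *ᵥ μ) i := by
  refine Summable.of_norm_bounded ((summable_geometric_of_lt_one hγ0 hγ1).mul_right (∑ j, |μ j|))
    fun t => ?_
  rw [Real.norm_eq_abs, abs_mul, abs_of_nonneg (pow_nonneg hγ0 t)]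
  gcongr
  calc |((M ^ t) *ᵥ μ) i| ≤ ∑ j, |((M ^ t) *ᵥ μ) j| :=
        Finset.single_le_sum (f := fun j => |((M ^ t) *ᵥ μ) j|)
          (fun j _ => abs_nonneg _) (Finset.mem_univ i)
    _ ≤ ∑ j, |μ j| := sum_abs_mulVec_le_of_mem_colStochastic (pow_mem hM t) μ

section DiscountedStateDistribution

variable {S A : Type*} [Fintype S] [DecidableEq S] [Fintype A] {γ : ℝ} {P : S → A → S → ℝ}
  {μ : S → ℝ} {pol : S → A → ℝ}

theorem dFut_nonneg (hM : Pmat P pol ∈ colStochastic ℝ S) (hγ0 : 0 ≤ γ) (hγ1 : γ < 1)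
    (hμ0 : ∀ s, 0 ≤ μ s) (s : S) : 0 ≤ dFut γ P μ pol s :=
  mul_nonneg (by linarith) <| tsum_nonneg fun t =>
    mul_nonneg (pow_nonneg hγ0 t) (nonneg_mulVec_of_mem_colStochastic (pow_mem hM t) hμ0 s)

theorem sum_dFut (hM : Pmat P pol ∈ colStochastic ℝ S) (hγ0 : 0 ≤ γ) (hγ1 : γ < 1) :
    ∑ s, dFut γ P μ pol s = ∑ s, μ s := by
  have hterm (t : ℕ) : ∑ s, γ ^ t * ((Pmat P pol ^ t) *ᵥ μ) s = γ ^ t * ∑ s, μ s := by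
    rw [← Finset.mul_sum, sum_mulVec_of_mem_colStochastic (pow_mem hM t)]
  simp only [dFut]
  rw [← Finset.mul_sum, ← Summable.tsum_finsetSum fun s _ =>
    summable_geometric_mul_pow_mulVec hM hγ0 hγ1 μ s, tsum_congr hterm, tsum_mul_right,
    tsum_geometric_of_lt_one hγ0 hγ1]
  field_simp [(by linarith : 1 - γ ≠ 0)]

theorem dFut_eq_add (hM : Pmat P pol ∈ colStochastic ℝ S) (hγ0 : 0 ≤ γ) (hγ1 : γ < 1) (s : S) :
    dFut γ P μ pol s = (1 - γ) * μ s + γ * (Pmat P pol *ᵥ dFut γ P μ pol) s := by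
  simp only [dFut, mulVec, dotProduct]
  generalize Pmat P pol = M at hM ⊢
  have hsumm := summable_geometric_mul_pow_mulVec hM hγ0 hγ1 μ
  have hshift (t : ℕ) : γ ^ (t + 1) * ((M ^ (t + 1)) *ᵥ μ) s
      = γ * ∑ j, M s j * (γ ^ t * ((M ^ t) *ᵥ μ) j) := by
    rw [pow_succ' M t, ← mulVec_mulVec]
    simp only [mulVec, dotProduct, Finset.mul_sum]
    exact Finset.sum_congr rfl fun j _ => Finset.sum_congr rfl fun i _ => by ring
  have hswap : ∑' t : ℕ, ∑ j, M s j * (γ ^ t * ((M ^ t) *ᵥ μ) j)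
      = ∑ j, M s j * ∑' t : ℕ, γ ^ t * ((M ^ t) *ᵥ μ) j := by
    rw [Summable.tsum_finsetSum fun j _ => (hsumm j).mul_left (M s j)]
    simp only [tsum_mul_left]
  have key : ∑' t : ℕ, γ ^ t * ((M ^ t) *ᵥ μ) s
      = μ s + γ * ∑ j, M s j * ∑' t : ℕ, γ ^ t * ((M ^ t) *ᵥ μ) j := by
    rw [(hsumm s).tsum_eq_zero_add, tsum_congr hshift, tsum_mul_left, hswap]
    simp
  simp only [mulVec, dotProduct] at key
  rw [key, mul_add, Finset.mul_sum, Finset.mul_sum, Finset.mul_sum]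
  congr 1
  exact Finset.sum_congr rfl fun j _ => by ring

end DiscountedStateDistribution

section PerformanceDifference

variable {S A : Type*} [Fintype S] [Fintype A] {γ : ℝ} {P : S → A → S → ℝ}
  {R : S → A → S → ℝ} {μ : S → ℝ} {pol : S → A → ℝ} {V : S → ℝ}

theorem sum_mul_Adv_eq (hpol1 : ∀ s, ∑ a, pol s a = 1) (s : S) :
    ∑ a, pol s a * Adv γ P R V s a
      = ∑ a, pol s a * ∑ s', P s a s' * R s a s' + γ * (V ᵥ* Pmat P pol) s - V s := by
  simp only [Adv, Pmat, vecMul, dotProduct, mul_add, Finset.sum_add_distrib, mul_sub,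
    Finset.sum_sub_distrib, ← Finset.sum_mul, hpol1, one_mul, Finset.mul_sum]
  congr 2
  rw [Finset.sum_comm]
  exact Finset.sum_congr rfl fun s' _ => Finset.sum_congr rfl fun a _ => by ring

theorem sum_mul_Adv_eq_zero (hpol1 : ∀ s, ∑ a, pol s a = 1)
    (hV : ∀ s, V s = ∑ a, pol s a * ∑ s', P s a s' * (R s a s' + γ * V s')) (s : S) :
    ∑ a, pol s a * Adv γ P R V s a = 0 := by
  simp only [Adv, mul_sub, Finset.sum_sub_distrib, ← Finset.sum_mul, hpol1, one_mul, ← hV,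
    sub_self]

theorem sum_dFut_mul_sum_mul_Adv [DecidableEq S] (hM : Pmat P pol ∈ colStochastic ℝ S)
    (hγ0 : 0 ≤ γ) (hγ1 : γ < 1) (hpol1 : ∀ s, ∑ a, pol s a = 1) :
    ∑ s, dFut γ P μ pol s * ∑ a, pol s a * Adv γ P R V s a
      = (1 - γ) * Jret γ P R μ pol - (1 - γ) * ∑ s, μ s * V s := by
  set d := dFut γ P μ pol
  have hflow : γ • (Pmat P pol *ᵥ d) = d - (1 - γ) • μ := by
    ext s; simp [dFut_eq_add hM hγ0 hγ1 s, d]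
  have hJ : (1 - γ) * Jret γ P R μ pol
      = ∑ s, d s * ∑ a, pol s a * ∑ s', P s a s' * R s a s' := by
    rw [Jret, ← mul_assoc, mul_one_div_cancel (by linarith), one_mul]
  have hV : γ * (V ᵥ* Pmat P pol ⬝ᵥ d) = V ⬝ᵥ d - (1 - γ) * (V ⬝ᵥ μ) := by
    rw [← dotProduct_mulVec, ← smul_eq_mul, ← dotProduct_smul, hflow, dotProduct_sub,
      dotProduct_smul, smul_eq_mul]
  simp only [sum_mul_Adv_eq hpol1, mul_sub, mul_add, Finset.sum_sub_distrib,
    Finset.sum_add_distrib]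
  simp only [dotProduct] at hV
  have e : ∑ s, d s * (γ * (V ᵥ* Pmat P pol) s) = γ * ∑ s, (V ᵥ* Pmat P pol) s * d s := by
    rw [Finset.mul_sum]; exact Finset.sum_congr rfl fun _ _ => by ring
  rw [hJ, e, hV]
  simp only [mul_comm (V _)]
  ring

end PerformanceDifference

section PolicyPerturbation

variable {S A : Type*} [Fintype S] [DecidableEq S] [Fintype A] {γ : ℝ} {P : S → A → S → ℝ}
  {μ : S → ℝ} {pol pol' : S → A → ℝ}

theorem sum_abs_dFut_sub_le (hγ0 : 0 ≤ γ) (hγ1 : γ < 1) (hP0 : ∀ s a s', 0 ≤ P s a s')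
    (hP1 : ∀ s a, ∑ s', P s a s' = 1) (hμ0 : ∀ s, 0 ≤ μ s)
    (hpol0 : ∀ s a, 0 ≤ pol s a) (hpol1 : ∀ s, ∑ a, pol s a = 1)
    (hpol'0 : ∀ s a, 0 ≤ pol' s a) (hpol'1 : ∀ s, ∑ a, pol' s a = 1) :
    (1 - γ) * ∑ s, |dFut γ P μ pol' s - dFut γ P μ pol s|
      ≤ 2 * γ * ∑ s, dFut γ P μ pol s * DTV pol' pol s := by
  have hM := Pmat_mem_colStochastic hP0 hP1 hpol0 hpol1
  have hM' := Pmat_mem_colStochastic hP0 hP1 hpol'0 hpol'1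
  have hflow := dFut_eq_add (μ := μ) hM hγ0 hγ1
  have hflow' := dFut_eq_add (μ := μ) hM' hγ0 hγ1
  set d := dFut γ P μ pol
  set d' := dFut γ P μ pol'
  have hdiff (s : S) : d' s - d s
      = γ * (Pmat P pol' *ᵥ (d' - d)) s + γ * ((Pmat P pol' - Pmat P pol) *ᵥ d) s := by
    rw [hflow' s, hflow s, mulVec_sub, sub_mulVec]
    simp only [Pi.sub_apply]
    ring
  have htri : ∑ s, |d' s - d s| ≤ γ * ∑ s, |(Pmat P pol' *ᵥ (d' - d)) s|
      + γ * ∑ s, |((Pmat P pol' - Pmat P pol) *ᵥ d) s| := by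
    simp only [Finset.mul_sum, ← Finset.sum_add_distrib, hdiff]
    gcongr with s
    refine (abs_add_le _ _).trans_eq ?_
    rw [abs_mul, abs_mul, abs_of_nonneg hγ0]
  have hcontract := sum_abs_mulVec_le_of_mem_colStochastic hM' (d' - d)
  have hperturb := sum_abs_Pmat_sub_mulVec_le (pol' := pol') (pol := pol) hP0 hP1
    (dFut_nonneg hM hγ0 hγ1 hμ0)
  simp only [Pi.sub_apply] at hcontract
  nlinarith

end PolicyPerturbation

theorem sum_mul_sub_sum_mul_le {ι : Type*} [Fintype ι] (x y f : ι → ℝ) :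
    ∑ i, x i * f i - ∑ i, y i * f i ≤ (⨆ i, |f i|) * ∑ i, |x i - y i| := by
  rw [← Finset.sum_sub_distrib, Finset.mul_sum]
  refine Finset.sum_le_sum fun i _ => ?_
  calc x i * f i - y i * f i ≤ |x i - y i| * |f i| := by
        rw [← sub_mul, ← abs_mul]; exact le_abs_self _
    _ ≤ (⨆ i, |f i|) * |x i - y i| := by
        rw [mul_comm]; gcongr; exact Finite.le_ciSup_of_le i le_rfl

section ConstraintViolation

variable {S A : Type*} [Fintype S] [DecidableEq S] [Fintype A] {γ : ℝ} {P : S → A → S → ℝ}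
  {R : S → A → S → ℝ} {μ : S → ℝ} {pol pol' : S → A → ℝ} {V : S → ℝ}

theorem Jret_eq_sum_mul_of_bellman (hM : Pmat P pol ∈ colStochastic ℝ S) (hγ0 : 0 ≤ γ)
    (hγ1 : γ < 1) (hpol1 : ∀ s, ∑ a, pol s a = 1)
    (hV : ∀ s, V s = ∑ a, pol s a * ∑ s', P s a s' * (R s a s' + γ * V s')) :
    Jret γ P R μ pol = ∑ s, μ s * V s := by
  have h := sum_dFut_mul_sum_mul_Adv (R := R) (V := V) (μ := μ) hM hγ0 hγ1 hpol1
  simp only [sum_mul_Adv_eq_zero hpol1 hV, mul_zero, Finset.sum_const_zero] at h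
  have h1γ : 1 - γ ≠ 0 := by linarith
  exact mul_left_cancel₀ h1γ (by linarith)

theorem Jret_le_add_sum_dFut_mul_Adv (hγ0 : 0 ≤ γ) (hγ1 : γ < 1)
    (hP0 : ∀ s a s', 0 ≤ P s a s') (hP1 : ∀ s a, ∑ s', P s a s' = 1) (hμ0 : ∀ s, 0 ≤ μ s)
    (hpol0 : ∀ s a, 0 ≤ pol s a) (hpol1 : ∀ s, ∑ a, pol s a = 1)
    (hpol'0 : ∀ s a, 0 ≤ pol' s a) (hpol'1 : ∀ s, ∑ a, pol' s a = 1)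
    (hV : ∀ s, V s = ∑ a, pol s a * ∑ s', P s a s' * (R s a s' + γ * V s')) :
    Jret γ P R μ pol' ≤ Jret γ P R μ pol
      + (1 / (1 - γ)) * ∑ s, dFut γ P μ pol s * ∑ a, pol' s a * Adv γ P R V s a
      + 2 * γ * (⨆ s, |∑ a, pol' s a * Adv γ P R V s a|) / (1 - γ) ^ 2
        * ∑ s, dFut γ P μ pol s * DTV pol' pol s := by
  have h1γ : 0 < 1 - γ := by linarith
  have hM := Pmat_mem_colStochastic hP0 hP1 hpol0 hpol1
  have hM' := Pmat_mem_colStochastic hP0 hP1 hpol'0 hpol'1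
  have hJ := Jret_eq_sum_mul_of_bellman (μ := μ) hM hγ0 hγ1 hpol1 hV
  have hJ' := sum_dFut_mul_sum_mul_Adv (R := R) (V := V) (μ := μ) hM' hγ0 hγ1 hpol'1
  have hshift := sum_mul_sub_sum_mul_le (dFut γ P μ pol') (dFut γ P μ pol)
    fun s => ∑ a, pol' s a * Adv γ P R V s a
  have hdist := sum_abs_dFut_sub_le hγ0 hγ1 hP0 hP1 hμ0 hpol0 hpol1 hpol'0 hpol'1
  set d := dFut γ P μ pol
  set d' := dFut γ P μ pol'
  set ε := ⨆ s, |∑ a, pol' s a * Adv γ P R V s a|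
  have hε : 0 ≤ ε := Real.iSup_nonneg fun _ => abs_nonneg _
  have hdist' : ∑ s, |d' s - d s| ≤ 2 * γ * (∑ s, d s * DTV pol' pol s) / (1 - γ) := by
    rw [le_div_iff₀ h1γ]; linarith
  calc Jret γ P R μ pol'
      = Jret γ P R μ pol + (1 / (1 - γ)) * ∑ s, d s * ∑ a, pol' s a * Adv γ P R V s a
        + (∑ s, d' s * ∑ a, pol' s a * Adv γ P R V s a
          - ∑ s, d s * ∑ a, pol' s a * Adv γ P R V s a) / (1 - γ) := by
        rw [hJ]; field_simp; linarith
    _ ≤ Jret γ P R μ pol + (1 / (1 - γ)) * ∑ s, d s * ∑ a, pol' s a * Adv γ P R V s a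
        + ε * (2 * γ * (∑ s, d s * DTV pol' pol s) / (1 - γ)) / (1 - γ) := by
        gcongr
        exact hshift.trans (mul_le_mul_of_nonneg_left hdist' hε)
    _ = _ := by field_simp

end ConstraintViolation

theorem cpo_update_worst_case_constraint_violation_general
    [Fintype S] [DecidableEq S] [Fintype A]
    (γ : ℝ) (hγ0 : 0 ≤ γ) (hγ1 : γ < 1)
    (P : S → A → S → ℝ) (hP0 : ∀ s a s', 0 ≤ P s a s')
    (hP1 : ∀ s a, (∑ s', P s a s') = 1)
    (μ : S → ℝ) (hμ0 : ∀ s, 0 ≤ μ s) (hμ1 : (∑ s, μ s) = 1)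
    (C : S → A → S → ℝ)
    (pk pk1 : S → A → ℝ)
    (hpk0 : ∀ s a, 0 < pk s a) (hpk1 : ∀ s, (∑ a, pk s a) = 1)
    (hpk10 : ∀ s a, 0 ≤ pk1 s a) (hpk11 : ∀ s, (∑ a, pk1 s a) = 1)
    (VC : S → ℝ)
    (hVC : ∀ s, VC s = ∑ a, pk s a * (∑ s', P s a s' * (C s a s' + γ * VC s')))
    (di δ : ℝ)
    (hsurr : Jret γ P C μ pk
        + (1 / (1 - γ)) * ∑ s, dFut γ P μ pk s * (∑ a, pk1 s a * Adv γ P C VC s a)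
      ≤ di)
    (hkl : (∑ s, dFut γ P μ pk s * DKL pk1 pk s) ≤ δ) :
    Jret γ P C μ pk1
      ≤ di + Real.sqrt (2 * δ) * γ * (⨆ t, |∑ a, pk1 t a * Adv γ P C VC t a|)
          / (1 - γ) ^ 2 := by
  have hpk0' : ∀ s a, 0 ≤ pk s a := fun s a => (hpk0 s a).le
  have hM := Pmat_mem_colStochastic hP0 hP1 hpk0' hpk1
  have hbound := Jret_le_add_sum_dFut_mul_Adv hγ0 hγ1 hP0 hP1 hμ0 hpk0' hpk1 hpk10 hpk11 hVC
  have hTV : 2 * ∑ s, dFut γ P μ pk s * DTV pk1 pk s ≤ √(2 * δ) :=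
    (two_mul_sum_mul_DTV_le_sqrt (dFut_nonneg hM hγ0 hγ1 hμ0) (by rw [sum_dFut hM hγ0 hγ1, hμ1])
      hpk10 hpk11 hpk0 hpk1).trans (Real.sqrt_le_sqrt (by linarith))
  set ε := ⨆ t, |∑ a, pk1 t a * Adv γ P C VC t a|
  have hcoef : 0 ≤ γ * ε / (1 - γ) ^ 2 := by
    have : 0 ≤ ε := Real.iSup_nonneg fun t => abs_nonneg _
    positivity
  calc Jret γ P C μ pk1
      ≤ di + γ * ε / (1 - γ) ^ 2 * (2 * ∑ s, dFut γ P μ pk s * DTV pk1 pk s) := by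
        linarith [show 2 * γ * ε / (1 - γ) ^ 2 * ∑ s, dFut γ P μ pk s * DTV pk1 pk s
          = γ * ε / (1 - γ) ^ 2 * (2 * ∑ s, dFut γ P μ pk s * DTV pk1 pk s) by ring]
    _ ≤ di + γ * ε / (1 - γ) ^ 2 * √(2 * δ) := by gcongr
    _ = _ := by ring

/-- **Proposition 2 (CPO update worst-case constraint violation).** If
`J_C(π_k) + (1/(1-γ)) E_{s∼d^{π_k}, a∼π_{k+1}}[A_C^{π_k}(s,a)] ≤ d_i` and the average KL
divergence is at most `δ`, then `J_C(π_{k+1}) ≤ d_i + √(2δ) γ ε_C^{π_{k+1}} / (1-γ)²`. -/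
theorem cpo_update_worst_case_constraint_violation
    [Fintype S] [DecidableEq S] [Nonempty S] [Fintype A] [Nonempty A]
    (γ : ℝ) (hγ0 : 0 ≤ γ) (hγ1 : γ < 1)
    (P : S → A → S → ℝ) (hP0 : ∀ s a s', 0 ≤ P s a s')
    (hP1 : ∀ s a, (∑ s', P s a s') = 1)
    (μ : S → ℝ) (hμ0 : ∀ s, 0 ≤ μ s) (hμ1 : (∑ s, μ s) = 1)
    (C : S → A → S → ℝ)
    (pk pk1 : S → A → ℝ)
    (hpk0 : ∀ s a, 0 < pk s a) (hpk1 : ∀ s, (∑ a, pk s a) = 1)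
    (hpk10 : ∀ s a, 0 ≤ pk1 s a) (hpk11 : ∀ s, (∑ a, pk1 s a) = 1)
    (VC : S → ℝ)
    (hVC : ∀ s, VC s = ∑ a, pk s a * (∑ s', P s a s' * (C s a s' + γ * VC s')))
    (di δ : ℝ) (hδ : 0 < δ)
    (hsurr : Jret γ P C μ pk
        + (1 / (1 - γ)) * ∑ s, dFut γ P μ pk s * (∑ a, pk1 s a * Adv γ P C VC s a)
      ≤ di)
    (hkl : (∑ s, dFut γ P μ pk s * DKL pk1 pk s) ≤ δ) :
    Jret γ P C μ pk1
      ≤ di + Real.sqrt (2 * δ) * γ * (⨆ t, |∑ a, pk1 t a * Adv γ P C VC t a|)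
          / (1 - γ) ^ 2 :=
  cpo_update_worst_case_constraint_violation_general γ hγ0 hγ1 P hP0 hP1 μ hμ0 hμ1 C pk pk1 hpk0
    hpk1 hpk10 hpk11 VC hVC di δ hsurr hkl
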